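/- General Ordinal Sum Theorem: Let G ≅ ⟨a | b⟩ be a ball with a, b and G numbers. Suppose, as values, b − G ≤ 1, and define positive integers α₁, α₂, … recursively by letting αᵢ be the least positive integer such that 2^{−αᵢ} < (b − G) − Σ_{j=1}^{i−1} 2^{−αⱼ} (each αᵢ exists since the remainder is a positive dyadic rational). Then for every positive integer k, taken in canonical form, G : k = G + Σ_{i=1}^{k} 2^{−αᵢ}. Dually, if G − a ≤ 1 and βᵢ is the least positive integer such that 2^{−βᵢ} < (G − a) − Σ_{j=1}^{i−1} 2^{−βⱼ}, then G : (−k) = G − Σ_{i=1}^{k} 2^{−βᵢ}. -/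

import Mathlib

/-! The combinatorial game theory of Mathlib (`SetTheory.PGame`, `SetTheory.Game`,
`PGame.Numeric`, `PGame.powHalf`) has been removed from Mathlib; it is re-created here with
its old definitions and meaning. -/
namespace SetTheory

universe u

inductive PGame : Type (u + 1)
  | mk : ∀ α β : Type u, (α → PGame) → (β → PGame) → PGame

namespace PGame

def LeftMoves : PGame → Type u
  | mk l _ _ _ => l

def RightMoves : PGame → Type u
  | mk _ r _ _ => r

def moveLeft : ∀ g : PGame, LeftMoves g → PGame
  | mk _ _ L _ => L

def moveRight : ∀ g : PGame, RightMoves g → PGame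
  | mk _ _ _ R => R

def leAuxR (xl xr : Type u) (IHl : xl → PGame.{u} → Prop × Prop)
    (IHr : xr → PGame.{u} → Prop × Prop) : PGame.{u} → Prop × Prop
  | mk yl yr yL yR =>
    ((∀ i, ¬ (IHl i (mk yl yr yL yR)).2) ∧ (∀ j, ¬ (leAuxR xl xr IHl IHr (yR j)).2),
     (∀ j, ¬ (leAuxR xl xr IHl IHr (yL j)).1) ∧ (∀ i, ¬ (IHr i (mk yl yr yL yR)).1))

def leAux : PGame.{u} → PGame.{u} → Prop × Prop
  | mk xl xr xL xR => leAuxR xl xr (fun i => leAux (xL i)) (fun i => leAux (xR i))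

theorem leAux_swap (x y : PGame.{u}) :
    ((leAux x y).2 ↔ (leAux y x).1) ∧ ((leAux y x).2 ↔ (leAux x y).1) := by
  induction x generalizing y with
  | mk xl xr xL xR IHl IHr =>
  induction y with
  | mk yl yr yL yR JHl JHr =>
  constructor
  · show ((∀ j, ¬ (leAux (mk xl xr xL xR) (yL j)).1) ∧
        (∀ i, ¬ (leAux (xR i) (mk yl yr yL yR)).1)) ↔
      ((∀ j, ¬ (leAux (yL j) (mk xl xr xL xR)).2) ∧
        (∀ i, ¬ (leAux (mk yl yr yL yR) (xR i)).2))
    exact Iff.and (forall_congr' fun j => not_congr (JHl j).2.symm)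
      (forall_congr' fun i => not_congr (IHr i _).2.symm)
  · show ((∀ j, ¬ (leAux (mk yl yr yL yR) (xL j)).1) ∧
        (∀ i, ¬ (leAux (yR i) (mk xl xr xL xR)).1)) ↔
      ((∀ i, ¬ (leAux (xL i) (mk yl yr yL yR)).2) ∧
        (∀ j, ¬ (leAux (mk xl xr xL xR) (yR j)).2))
    exact Iff.and (forall_congr' fun j => not_congr (IHl j _).1.symm)
      (forall_congr' fun i => not_congr (JHr i).1.symm)

instance : LE PGame.{u} := ⟨fun x y => (leAux x y).1⟩

theorem mk_le_mk {xl xr : Type u} {xL : xl → PGame.{u}} {xR : xr → PGame.{u}}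
    {yl yr : Type u} {yL : yl → PGame.{u}} {yR : yr → PGame.{u}} :
    mk xl xr xL xR ≤ mk yl yr yL yR ↔
      (∀ i, ¬ mk yl yr yL yR ≤ xL i) ∧ (∀ j, ¬ yR j ≤ mk xl xr xL xR) := by
  show ((∀ i, ¬ (leAux (xL i) (mk yl yr yL yR)).2) ∧
      (∀ j, ¬ (leAux (mk xl xr xL xR) (yR j)).2)) ↔ _
  exact Iff.and (forall_congr' fun i => not_congr (leAux_swap _ _).1)
    (forall_congr' fun j => not_congr (leAux_swap _ _).1)

theorem le_def {x y : PGame.{u}} :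
    x ≤ y ↔ (∀ i, ¬ y ≤ x.moveLeft i) ∧ (∀ j, ¬ y.moveRight j ≤ x) := by
  cases x; cases y; exact mk_le_mk

theorem not_le_iff {x y : PGame.{u}} :
    ¬ y ≤ x ↔ (∃ i, x ≤ y.moveLeft i) ∨ (∃ j, x.moveRight j ≤ y) := by
  rw [le_def]; simp only [not_and_or, not_forall, not_not]

theorem lf_of_le_moveLeft {x y : PGame.{u}} {i : y.LeftMoves} (h : x ≤ y.moveLeft i) :
    ¬ y ≤ x := not_le_iff.2 (Or.inl ⟨i, h⟩)

theorem lf_of_moveRight_le {x y : PGame.{u}} {j : x.RightMoves} (h : x.moveRight j ≤ y) :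
    ¬ y ≤ x := not_le_iff.2 (Or.inr ⟨j, h⟩)

theorem moveLeft_lf_of_le {x y : PGame.{u}} (h : x ≤ y) (i : x.LeftMoves) :
    ¬ y ≤ x.moveLeft i := (le_def.1 h).1 i

theorem lf_moveRight_of_le {x y : PGame.{u}} (h : x ≤ y) (j : y.RightMoves) :
    ¬ y.moveRight j ≤ x := (le_def.1 h).2 j

theorem pg_le_refl (x : PGame.{u}) : x ≤ x := by
  induction x with
  | mk xl xr xL xR IHl IHr =>
    exact le_def.2 ⟨fun i => lf_of_le_moveLeft (IHl i), fun j => lf_of_moveRight_le (IHr j)⟩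

theorem le_trans_aux (x y z : PGame.{u}) :
    (x ≤ y → y ≤ z → x ≤ z) ∧ (y ≤ z → z ≤ x → y ≤ x) ∧ (z ≤ x → x ≤ y → z ≤ y) := by
  induction x generalizing y z with
  | mk xl xr xL xR IHxl IHxr =>
  induction y generalizing z with
  | mk yl yr yL yR IHyl IHyr =>
  induction z with
  | mk zl zr zL zR IHzl IHzr =>
  refine ⟨fun h1 h2 => ?_, fun h1 h2 => ?_, fun h1 h2 => ?_⟩
  · refine le_def.2 ⟨fun i hz => ?_, fun k hz => ?_⟩
    · exact moveLeft_lf_of_le h1 i ((IHxl i _ _).2.1 h2 hz)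
    · exact lf_moveRight_of_le h2 k ((IHzr k).2.2 hz h1)
  · refine le_def.2 ⟨fun j hx => ?_, fun i hx => ?_⟩
    · exact moveLeft_lf_of_le h1 j ((IHyl j _).2.2 h2 hx)
    · exact lf_moveRight_of_le h2 i ((IHxr i _ _).1 hx h1)
  · refine le_def.2 ⟨fun k hy => ?_, fun j hy => ?_⟩
    · exact moveLeft_lf_of_le h1 k ((IHzl k).1 h2 hy)
    · exact lf_moveRight_of_le h2 j ((IHyr j _).2.1 hy h1)

theorem pg_le_trans {x y z : PGame.{u}} (h1 : x ≤ y) (h2 : y ≤ z) : x ≤ z :=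
  (le_trans_aux x y z).1 h1 h2

instance : Preorder PGame.{u} where
  le x y := x ≤ y
  le_refl := pg_le_refl
  le_trans _ _ _ := pg_le_trans

def Equiv (x y : PGame.{u}) : Prop := x ≤ y ∧ y ≤ x

instance setoid : Setoid PGame.{u} :=
  ⟨Equiv, ⟨fun x => ⟨pg_le_refl x, pg_le_refl x⟩, fun h => ⟨h.2, h.1⟩,
    fun h1 h2 => ⟨pg_le_trans h1.1 h2.1, pg_le_trans h2.2 h1.2⟩⟩⟩

instance : Zero PGame.{u} := ⟨⟨PEmpty, PEmpty, PEmpty.elim, PEmpty.elim⟩⟩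

instance : One PGame.{u} := ⟨⟨PUnit, PEmpty, fun _ => 0, PEmpty.elim⟩⟩

def neg : PGame.{u} → PGame.{u}
  | ⟨l, r, L, R⟩ => ⟨r, l, fun i => neg (R i), fun i => neg (L i)⟩

instance : Neg PGame.{u} := ⟨neg⟩

def addAux (xl xr : Type u) (IHl : xl → PGame.{u} → PGame.{u})
    (IHr : xr → PGame.{u} → PGame.{u}) : PGame.{u} → PGame.{u}
  | mk yl yr yL yR => mk (xl ⊕ yl) (xr ⊕ yr)
      (Sum.elim (fun i => IHl i (mk yl yr yL yR)) (fun j => addAux xl xr IHl IHr (yL j)))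
      (Sum.elim (fun i => IHr i (mk yl yr yL yR)) (fun j => addAux xl xr IHl IHr (yR j)))

def add : PGame.{u} → PGame.{u} → PGame.{u}
  | mk xl xr xL xR => addAux xl xr (fun i => add (xL i)) (fun i => add (xR i))

instance : Add PGame.{u} := ⟨add⟩

theorem exists_add_moveLeft_inl (x y : PGame.{u}) (i : x.LeftMoves) :
    ∃ k, (x + y).moveLeft k = x.moveLeft i + y := by
  cases x; cases y; exact ⟨Sum.inl i, rfl⟩

theorem exists_add_moveLeft_inr (x y : PGame.{u}) (i : y.LeftMoves) :
    ∃ k, (x + y).moveLeft k = x + y.moveLeft i := by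
  cases x; cases y; exact ⟨Sum.inr i, rfl⟩

theorem exists_add_moveRight_inl (x y : PGame.{u}) (j : x.RightMoves) :
    ∃ k, (x + y).moveRight k = x.moveRight j + y := by
  cases x; cases y; exact ⟨Sum.inl j, rfl⟩

theorem exists_add_moveRight_inr (x y : PGame.{u}) (j : y.RightMoves) :
    ∃ k, (x + y).moveRight k = x + y.moveRight j := by
  cases x; cases y; exact ⟨Sum.inr j, rfl⟩

theorem lf_add_of_le_inl {x a b : PGame.{u}} (i : a.LeftMoves)
    (h : x ≤ a.moveLeft i + b) : ¬ a + b ≤ x := by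
  obtain ⟨k, hk⟩ := exists_add_moveLeft_inl a b i
  exact lf_of_le_moveLeft (i := k) (by rw [hk]; exact h)

theorem lf_add_of_le_inr {x a b : PGame.{u}} (i : b.LeftMoves)
    (h : x ≤ a + b.moveLeft i) : ¬ a + b ≤ x := by
  obtain ⟨k, hk⟩ := exists_add_moveLeft_inr a b i
  exact lf_of_le_moveLeft (i := k) (by rw [hk]; exact h)

theorem add_lf_of_inl_le {y a b : PGame.{u}} (j : a.RightMoves)
    (h : a.moveRight j + b ≤ y) : ¬ y ≤ a + b := by
  obtain ⟨k, hk⟩ := exists_add_moveRight_inl a b j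
  exact lf_of_moveRight_le (j := k) (by rw [hk]; exact h)

theorem add_lf_of_inr_le {y a b : PGame.{u}} (j : b.RightMoves)
    (h : a + b.moveRight j ≤ y) : ¬ y ≤ a + b := by
  obtain ⟨k, hk⟩ := exists_add_moveRight_inr a b j
  exact lf_of_moveRight_le (j := k) (by rw [hk]; exact h)

theorem add_le_add_right_aux (x y z : PGame.{u}) :
    (x ≤ y → x + z ≤ y + z) ∧ (¬ y ≤ x → ¬ y + z ≤ x + z) := by
  induction z generalizing x y with
  | mk zl zr zL zR IHzl IHzr =>
  induction x generalizing y with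
  | mk xl xr xL xR IHxl IHxr =>
  induction y with
  | mk yl yr yL yR IHyl IHyr =>
  constructor
  · intro h
    refine le_def.2 ⟨?_, ?_⟩
    · rintro (i | k)
      · exact (IHxl i _).2 (moveLeft_lf_of_le h i)
      · exact lf_add_of_le_inr k ((IHzl k _ _).1 h)
    · rintro (j | k)
      · exact (IHyr j).2 (lf_moveRight_of_le h j)
      · exact add_lf_of_inr_le k ((IHzr k _ _).1 h)
  · intro h
    rcases not_le_iff.1 h with ⟨i, hi⟩ | ⟨j, hj⟩
    · exact lf_add_of_le_inl i ((IHyl i).1 hi)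
    · exact add_lf_of_inl_le j ((IHxr j _).1 hj)

theorem add_comm_le (x y : PGame.{u}) : x + y ≤ y + x := by
  induction x generalizing y with
  | mk xl xr xL xR IHxl IHxr =>
  induction y with
  | mk yl yr yL yR IHyl IHyr =>
  refine le_def.2 ⟨?_, ?_⟩
  · rintro (i | j)
    · exact lf_add_of_le_inr i (IHxl i _)
    · exact lf_add_of_le_inl j (IHyl j)
  · rintro (j | i)
    · exact add_lf_of_inr_le j (IHyr j)
    · exact add_lf_of_inl_le i (IHxr i _)

theorem add_assoc_aux (x y z : PGame.{u}) :
    (x + y) + z ≤ x + (y + z) ∧ x + (y + z) ≤ (x + y) + z := by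
  induction x generalizing y z with
  | mk xl xr xL xR IHxl IHxr =>
  induction y generalizing z with
  | mk yl yr yL yR IHyl IHyr =>
  induction z with
  | mk zl zr zL zR IHzl IHzr =>
  constructor
  · refine le_def.2 ⟨?_, ?_⟩
    · rintro ((i | j) | k)
      · exact lf_add_of_le_inl i (IHxl i _ _).1
      · exact lf_add_of_le_inr (Sum.inl j) (IHyl j _).1
      · exact lf_add_of_le_inr (Sum.inr k) (IHzl k).1
    · rintro (i | (j | k))
      · exact add_lf_of_inl_le (Sum.inl i) (IHxr i _ _).1
      · exact add_lf_of_inl_le (Sum.inr j) (IHyr j _).1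
      · exact add_lf_of_inr_le k (IHzr k).1
  · refine le_def.2 ⟨?_, ?_⟩
    · rintro (i | (j | k))
      · exact lf_add_of_le_inl (Sum.inl i) (IHxl i (mk yl yr yL yR) (mk zl zr zL zR)).2
      · exact lf_add_of_le_inl (Sum.inr j) (IHyl j _).2
      · exact lf_add_of_le_inr k (IHzl k).2
    · rintro ((i | j) | k)
      · exact add_lf_of_inl_le i (IHxr i _ _).2
      · exact add_lf_of_inr_le (Sum.inl j) (IHyr j _).2
      · exact add_lf_of_inr_le (Sum.inr k) (IHzr k).2

theorem zero_add_aux (x : PGame.{u}) : 0 + x ≤ x ∧ x ≤ 0 + x := by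
  induction x with
  | mk xl xr xL xR IHl IHr =>
  constructor
  · refine le_def.2 ⟨?_, ?_⟩
    · rintro (e | i)
      · exact e.elim
      · exact lf_of_le_moveLeft (i := i) (IHl i).1
    · intro j
      exact add_lf_of_inr_le j (IHr j).1
  · refine le_def.2 ⟨?_, ?_⟩
    · intro i
      exact lf_add_of_le_inr i (IHl i).2
    · rintro (e | j)
      · exact e.elim
      · exact lf_of_moveRight_le (j := j) (IHr j).2

theorem neg_add_aux (x : PGame.{u}) : -x + x ≤ 0 ∧ 0 ≤ -x + x := by
  induction x with
  | mk xl xr xL xR IHl IHr =>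
  constructor
  · refine le_def.2 ⟨?_, ?_⟩
    · rintro (i | i)
      · exact add_lf_of_inr_le (a := -(xR i)) (b := mk xl xr xL xR) i (IHr i).1
      · exact add_lf_of_inl_le (a := -(mk xl xr xL xR)) (b := xL i) i (IHl i).1
    · rintro ⟨⟩
  · refine le_def.2 ⟨?_, ?_⟩
    · rintro ⟨⟩
    · rintro (i | j)
      · exact lf_add_of_le_inr (a := -(xL i)) (b := mk xl xr xL xR) i (IHl i).2
      · exact lf_add_of_le_inl (a := -(mk xl xr xL xR)) (b := xR j) j (IHr j).2

theorem neg_le_neg_aux (x y : PGame.{u}) :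
    (-y ≤ -x ↔ x ≤ y) ∧ (-x ≤ -y ↔ y ≤ x) := by
  induction x generalizing y with
  | mk xl xr xL xR IHxl IHxr =>
  induction y with
  | mk yl yr yL yR IHyl IHyr =>
  constructor
  · constructor
    · intro h
      refine le_def.2 ⟨fun j hj => ?_, fun i hi => ?_⟩
      · exact (le_def.1 h).2 j ((IHxl j _).2.2 hj)
      · exact (le_def.1 h).1 i ((IHyr i).2.2 hi)
    · intro h
      refine le_def.2 ⟨fun i hi => ?_, fun j hj => ?_⟩
      · exact (le_def.1 h).2 i ((IHyr i).2.1 hi)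
      · exact (le_def.1 h).1 j ((IHxl j _).2.1 hj)
  · constructor
    · intro h
      refine le_def.2 ⟨fun j hj => ?_, fun i hi => ?_⟩
      · exact (le_def.1 h).2 j ((IHyl j).1.2 hj)
      · exact (le_def.1 h).1 i ((IHxr i _).1.2 hi)
    · intro h
      refine le_def.2 ⟨fun i hi => ?_, fun j hj => ?_⟩
      · exact (le_def.1 h).2 i ((IHxr i _).1.1 hi)
      · exact (le_def.1 h).1 j ((IHyl j).1.1 hj)

theorem add_congr_aux {a b c d : PGame.{u}} (h1 : Equiv a c) (h2 : Equiv b d) :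
    Equiv (a + b) (c + d) := by
  have hl : ∀ x y z : PGame.{u}, y ≤ z → x + y ≤ x + z := fun x y z h =>
    pg_le_trans (add_comm_le x y)
      (pg_le_trans ((add_le_add_right_aux y z x).1 h) (add_comm_le z x))
  exact ⟨pg_le_trans ((add_le_add_right_aux a c b).1 h1.1) (hl c b d h2.1),
    pg_le_trans ((add_le_add_right_aux c a d).1 h1.2) (hl a d b h2.2)⟩

theorem neg_congr_aux {a b : PGame.{u}} (h : Equiv a b) : Equiv (-a) (-b) :=
  ⟨(neg_le_neg_aux a b).2.2 h.2, (neg_le_neg_aux a b).1.2 h.1⟩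

/-- A pre-game is numeric if, hereditarily, every Left option is less than every Right
option. -/
def Numeric : PGame → Prop
  | ⟨_, _, L, R⟩ => (∀ i j, L i < R j) ∧ (∀ i, Numeric (L i)) ∧ ∀ j, Numeric (R j)

/-- The pre-game `powHalf n` is `2⁻ⁿ`. -/
def powHalf : ℕ → PGame
  | 0 => 1
  | n + 1 => ⟨PUnit, PUnit, fun _ => 0, fun _ => powHalf n⟩

end PGame

/-- Games: pre-games modulo equivalence. -/
abbrev Game := Quotient PGame.setoid

namespace Game

open PGame

instance : Add Game.{u} :=
  ⟨Quotient.lift₂ (fun x y => (⟦x + y⟧ : Game)) fun _ _ _ _ h1 h2 =>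
    Quotient.sound (add_congr_aux h1 h2)⟩

instance : Neg Game.{u} :=
  ⟨Quotient.lift (fun x => (⟦-x⟧ : Game)) fun _ _ h => Quotient.sound (neg_congr_aux h)⟩

instance : Zero Game.{u} := ⟨⟦0⟧⟩

instance : One Game.{u} := ⟨⟦1⟧⟩

instance : LE Game.{u} :=
  ⟨Quotient.lift₂ (fun x y => x ≤ y) fun _ _ _ _ h1 h2 =>
    propext ⟨fun h => pg_le_trans (pg_le_trans h1.2 h) h2.1,
      fun h => pg_le_trans (pg_le_trans h1.1 h) h2.2⟩⟩

instance : LT Game.{u} := ⟨fun x y => x ≤ y ∧ ¬ y ≤ x⟩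

instance : PartialOrder Game.{u} where
  le x y := x ≤ y
  lt x y := x < y
  lt_iff_le_not_ge _ _ := Iff.rfl
  le_refl := by rintro ⟨x⟩; exact pg_le_refl x
  le_trans := by
    rintro ⟨x⟩ ⟨y⟩ ⟨z⟩ h1 h2
    exact pg_le_trans (x := x) (y := y) (z := z) h1 h2
  le_antisymm := by
    rintro ⟨x⟩ ⟨y⟩ h1 h2
    exact Quotient.sound ⟨h1, h2⟩

instance : AddCommGroup Game.{u} where
  add := (· + ·)
  zero := 0
  neg := Neg.neg
  add_assoc := by
    rintro ⟨x⟩ ⟨y⟩ ⟨z⟩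
    exact Quotient.sound ⟨(add_assoc_aux x y z).1, (add_assoc_aux x y z).2⟩
  zero_add := by
    rintro ⟨x⟩
    exact Quotient.sound ⟨(zero_add_aux x).1, (zero_add_aux x).2⟩
  add_zero := by
    rintro ⟨x⟩
    exact Quotient.sound ⟨pg_le_trans (add_comm_le x 0) (zero_add_aux x).1,
      pg_le_trans (zero_add_aux x).2 (add_comm_le 0 x)⟩
  add_comm := by
    rintro ⟨x⟩ ⟨y⟩
    exact Quotient.sound ⟨add_comm_le x y, add_comm_le y x⟩
  neg_add_cancel := by
    rintro ⟨x⟩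
    exact Quotient.sound ⟨(neg_add_aux x).1, (neg_add_aux x).2⟩
  nsmul := nsmulRec
  zsmul := zsmulRec

end Game

end SetTheory

open SetTheory PGame

universe u

/-- Ordinal sum `G : H`: players may move in the base `G` (ending all play in the
subordinate) or in the subordinate `H`. -/
def ordinalSum (G : PGame.{u}) : PGame.{u} → PGame.{u}
  | ⟨yl, yr, yL, yR⟩ =>
    ⟨G.LeftMoves ⊕ yl, G.RightMoves ⊕ yr,
     Sum.elim G.moveLeft fun j => ordinalSum G (yL j),
     Sum.elim G.moveRight fun j => ordinalSum G (yR j)⟩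

/-- `G ≜ H`: equivalence modulo domination.  Every Left option of `G` is `≤` some Left
option of `H`, every Left option of `H` is `≤` some Left option of `G`, every Right option
of `G` is `≥` some Right option of `H`, and every Right option of `H` is `≥` some Right
option of `G`. -/
def EquivDom (G H : PGame) : Prop :=
  (∀ i, ∃ j, G.moveLeft i ≤ H.moveLeft j) ∧
  (∀ j, ∃ i, H.moveLeft j ≤ G.moveLeft i) ∧
  (∀ i, ∃ j, H.moveRight j ≤ G.moveRight i) ∧
  (∀ j, ∃ i, G.moveRight i ≤ H.moveRight j)

/-- The ball `⟨a | b⟩`: the game with exactly one Left option `a` and exactly one Right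
option `b`. -/
def ball (a b : PGame.{u}) : PGame.{u} :=
  ⟨PUnit, PUnit, fun _ => a, fun _ => b⟩

/-- The canonical form of a natural number: `0 ≅ ⟨ | ⟩` and `n+1 ≅ ⟨n | ⟩`. -/
def canonNat : ℕ → PGame
  | 0 => 0
  | n + 1 => ⟨PUnit, PEmpty, fun _ => canonNat n, PEmpty.elim⟩

/-- The canonical form of an integer: for `n ≥ 0` it is `canonNat n`, and the canonical
form of a negative integer is the negative of the canonical form of its absolute value. -/
def canonInt (n : ℤ) : PGame :=
  if 0 ≤ n then canonNat n.toNat else -canonNat (-n).toNat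

/-- The game value of the dyadic rational `a / 2 ^ q`. -/
def dyadicVal (a : ℤ) (q : ℕ) : Game :=
  a • (⟦powHalf q⟧ : Game)

/-!
The Left option `a` of `G : (k + 1) = ⟨a, G : k | b⟩` is dominated by `G : k`, so up to equality
the ordinal sums are the iterated balls `Y₀ = G`, `Yₖ₊₁ = ⟨Yₖ | b⟩`; and a ball `⟨Y | b⟩` equals
the number of least birthday strictly between `Y` and `b`.

Let `Y = ⟨L | b⟩` and let `c > 0` be a number whose Left options are `≤ 0`, with
`Y + c < b ≤ Y + cᴿ` for the Right options `cᴿ` of `c`. Then the simplest number `z` between `Y`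
and `b` is `Y + c`. Indeed `z ≤ Y + c`, as `Y + c` lies between `Y` and `b` with all its Right
options `≥ b`. If `z < Y + c`, descending through Left options from `L` writes `Y = μ + c` with
`μ` born before `L`. For `Y' = ⟨μ | b⟩ ≤ Y`, induction on the birthday gives `Y' + c ≤ z'` for the
simplest `z'` between `Y'` and `b`; as `z' ≤ z`, this forces `Y' < Y`, hence
`z' ≤ Y = μ + c < Y' + c ≤ z'`.

For `c = 2^{-αₖ}` the minimality of `αₖ`, or `b - G ≤ 1` when `αₖ = 1`, gives `b ≤ Yₖ + 2^{1-αₖ}`.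
The negative case is the mirror image under `-(G : H) = (-G) : (-H)`.
-/

namespace SetTheory

namespace Game

-- Without this, instance search finds Mathlib's `Quotient.instPreorder` first.
instance : Preorder Game.{u} := Game.instPartialOrder.toPreorder

theorem mk_le_mk {x y : PGame.{u}} : (⟦x⟧ : Game) ≤ ⟦y⟧ ↔ x ≤ y := Iff.rfl

theorem mk_lt_mk {x y : PGame.{u}} : (⟦x⟧ : Game) < ⟦y⟧ ↔ x < y := Iff.rfl

instance : IsOrderedAddMonoid Game.{u} where
  add_le_add_left := by
    rintro ⟨a⟩ ⟨b⟩ h ⟨c⟩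
    exact (PGame.add_le_add_right_aux a b c).1 (show a ≤ b from h)

end Game

namespace PGame

instance : InvolutiveNeg PGame.{u} where
  neg_neg x := by
    induction x with
    | mk xl xr xL xR IHl IHr =>
      show mk xl xr (fun i => -(-(xL i))) (fun j => -(-(xR j))) = mk xl xr xL xR
      simp only [IHl, IHr]

theorem le_of_forall_lt {x y : PGame.{u}} (h₁ : ∀ i, x.moveLeft i < y)
    (h₂ : ∀ j, x < y.moveRight j) : x ≤ y :=
  le_def.2 ⟨fun i => (h₁ i).not_ge, fun j => (h₂ j).not_ge⟩

theorem exists_leftMoves_add {x y : PGame.{u}} {P : PGame.{u} → Prop} :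
    (∃ i, P ((x + y).moveLeft i)) ↔ (∃ i, P (x.moveLeft i + y)) ∨ ∃ i, P (x + y.moveLeft i) := by
  cases x; cases y; exact Sum.exists

theorem forall_rightMoves_add {x y : PGame.{u}} {P : PGame.{u} → Prop} :
    (∀ j, P ((x + y).moveRight j)) ↔ (∀ j, P (x.moveRight j + y)) ∧ ∀ j, P (x + y.moveRight j) := by
  cases x; cases y; exact Sum.forall

theorem exists_of_not_add_le {x y z : PGame.{u}} (h : ¬ x + y ≤ z) :
    (∃ i, z ≤ x.moveLeft i + y) ∨ (∃ i, z ≤ x + y.moveLeft i) ∨ ∃ j, z.moveRight j ≤ x + y := by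
  rcases not_le_iff.1 h with h | h
  · exact (exists_leftMoves_add.1 h).elim Or.inl (Or.inr ∘ Or.inl)
  · exact Or.inr (Or.inr h)

theorem numeric_def {x : PGame.{u}} : x.Numeric ↔ (∀ i j, x.moveLeft i < x.moveRight j) ∧
    (∀ i, (x.moveLeft i).Numeric) ∧ ∀ j, (x.moveRight j).Numeric := by
  cases x; exact Iff.rfl

theorem Numeric.moveLeft {x : PGame.{u}} (o : x.Numeric) (i : x.LeftMoves) :
    (x.moveLeft i).Numeric :=
  (numeric_def.1 o).2.1 i

theorem Numeric.moveRight {x : PGame.{u}} (o : x.Numeric) (j : x.RightMoves) :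
    (x.moveRight j).Numeric :=
  (numeric_def.1 o).2.2 j

theorem Numeric.le_of_not_ge {x y : PGame.{u}} (ox : x.Numeric) (oy : y.Numeric)
    (h : ¬ y ≤ x) : x ≤ y := by
  induction x generalizing y with
  | mk xl xr xL xR IHl IHr =>
  by_contra h'
  rcases not_le_iff.1 h with ⟨i, hi⟩ | ⟨j, hj⟩ <;> rcases not_le_iff.1 h' with ⟨i', hi'⟩ | ⟨j', hj'⟩
  · exact moveLeft_lf_of_le hi' i
      (IHl i' (ox.moveLeft i') (oy.moveLeft i) (moveLeft_lf_of_le hi i'))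
  · exact ((numeric_def.1 oy).1 i j').not_ge (le_trans hj' hi)
  · exact ((numeric_def.1 ox).1 i' j).not_ge (le_trans hj hi')
  · exact lf_moveRight_of_le hj' j
      (IHr j (ox.moveRight j) (oy.moveRight j') (lf_moveRight_of_le hj j'))

theorem Numeric.lt_of_not_ge {x y : PGame.{u}} (ox : x.Numeric) (oy : y.Numeric)
    (h : ¬ y ≤ x) : x < y :=
  lt_of_le_not_ge (ox.le_of_not_ge oy h) h

theorem Numeric.moveLeft_lt {x : PGame.{u}} (o : x.Numeric) (i : x.LeftMoves) :
    x.moveLeft i < x :=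
  (o.moveLeft i).lt_of_not_ge o (moveLeft_lf_of_le le_rfl i)

theorem Numeric.lt_moveRight {x : PGame.{u}} (o : x.Numeric) (j : x.RightMoves) :
    x < x.moveRight j :=
  o.lt_of_not_ge (o.moveRight j) (lf_moveRight_of_le le_rfl j)

theorem Numeric.add {x y : PGame.{u}} (ox : x.Numeric) (oy : y.Numeric) : (x + y).Numeric := by
  induction x generalizing y with
  | mk xl xr xL xR IHxl IHxr =>
  induction y with
  | mk yl yr yL yR IHyl IHyr =>
  refine numeric_def.2 ⟨?_, ?_, ?_⟩
  · rintro (i | i) (j | j)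
    · exact Game.mk_lt_mk.1 (add_lt_add_left (Game.mk_lt_mk.2 ((numeric_def.1 ox).1 i j))
        ⟦mk yl yr yL yR⟧)
    · exact Game.mk_lt_mk.1 (add_lt_add (Game.mk_lt_mk.2 (ox.moveLeft_lt i))
        (Game.mk_lt_mk.2 (oy.lt_moveRight j)))
    · exact Game.mk_lt_mk.1 (add_lt_add (Game.mk_lt_mk.2 (ox.lt_moveRight j))
        (Game.mk_lt_mk.2 (oy.moveLeft_lt i)))
    · exact Game.mk_lt_mk.1 (add_lt_add_right (Game.mk_lt_mk.2 ((numeric_def.1 oy).1 i j))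
        ⟦mk xl xr xL xR⟧)
  · rintro (i | i)
    · exact IHxl i (ox.moveLeft i) oy
    · exact IHyl i (oy.moveLeft i)
  · rintro (j | j)
    · exact IHxr j (ox.moveRight j) oy
    · exact IHyr j (oy.moveRight j)

theorem Numeric.neg {x : PGame.{u}} (o : x.Numeric) : (-x).Numeric := by
  induction x with
  | mk xl xr xL xR IHl IHr =>
  exact numeric_def.2
    ⟨fun j i => Game.mk_lt_mk.1 (neg_lt_neg (Game.mk_lt_mk.2 ((numeric_def.1 o).1 i j))),
      fun j => IHr j (o.moveRight j), fun i => IHl i (o.moveLeft i)⟩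

theorem numeric_zero : (0 : PGame.{u}).Numeric :=
  numeric_def.2 ⟨fun i => PEmpty.elim i, fun i => PEmpty.elim i, fun j => PEmpty.elim j⟩

theorem powHalf_pos : ∀ n, 0 < powHalf.{u} n
  | 0 => lt_of_le_not_ge (le_def.2 ⟨fun i => PEmpty.elim i, fun j => PEmpty.elim j⟩)
      (lf_of_le_moveLeft (i := PUnit.unit) le_rfl)
  | n + 1 => lt_of_le_not_ge (le_def.2 ⟨fun i => PEmpty.elim i, fun _ => (powHalf_pos n).not_ge⟩)
      (lf_of_le_moveLeft (i := PUnit.unit) le_rfl)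

theorem numeric_powHalf : ∀ n, (powHalf.{u} n).Numeric
  | 0 => numeric_def.2 ⟨fun _ j => PEmpty.elim j, fun _ => numeric_zero, fun j => PEmpty.elim j⟩
  | n + 1 => numeric_def.2 ⟨fun _ _ => powHalf_pos n, fun _ => numeric_zero,
      fun _ => numeric_powHalf n⟩

theorem powHalf_moveLeft (n : ℕ) (i : (powHalf.{u} n).LeftMoves) :
    (powHalf.{u} n).moveLeft i = 0 := by
  cases n <;> rfl

theorem numeric_ball {a b : PGame.{u}} (ha : a.Numeric) (hb : b.Numeric) (hab : a < b) :
    (ball a b).Numeric :=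
  numeric_def.2 ⟨fun _ _ => hab, fun _ => ha, fun _ => hb⟩

theorem left_lt_ball {a b : PGame.{u}} (h : (ball a b).Numeric) : a < ball a b :=
  h.moveLeft_lt PUnit.unit

theorem ball_lt_right {a b : PGame.{u}} (h : (ball a b).Numeric) : ball a b < b :=
  h.lt_moveRight PUnit.unit

noncomputable def birthday : PGame.{u} → Ordinal.{u}
  | ⟨_, _, xL, xR⟩ => max (⨆ i, birthday (xL i) + 1) (⨆ j, birthday (xR j) + 1)

theorem birthday_moveRight_lt {x : PGame.{u}} (j : x.RightMoves) :
    (x.moveRight j).birthday < x.birthday := by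
  cases x
  exact (Order.lt_add_one_iff.2 le_rfl).trans_le
    ((Ordinal.le_iSup (fun j => birthday _ + 1) j).trans (le_max_right _ _))

theorem birthday_moveLeft_lt {x : PGame.{u}} (i : x.LeftMoves) :
    (x.moveLeft i).birthday < x.birthday := by
  cases x
  exact (Order.lt_add_one_iff.2 le_rfl).trans_le
    ((Ordinal.le_iSup (fun i => birthday _ + 1) i).trans (le_max_left _ _))

structure IsSimplest (lo hi z : PGame.{u}) : Prop where
  numeric : z.Numeric
  left_lt : lo < z
  lt_right : z < hi
  birthday_le : ∀ e : PGame.{u}, e.Numeric → lo < e → e < hi → z.birthday ≤ e.birthday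

theorem exists_isSimplest {lo hi : PGame.{u}} (hlo : lo.Numeric) (hhi : hi.Numeric)
    (h : lo < hi) : ∃ z, IsSimplest lo hi z := by
  have hB := numeric_ball hlo hhi h
  obtain ⟨_, ⟨z, hz, hloz, hzhi, rfl⟩, hmin⟩ := Ordinal.lt_wf.has_min
    {o | ∃ e : PGame.{u}, e.Numeric ∧ lo < e ∧ e < hi ∧ e.birthday = o}
    ⟨_, _, hB, left_lt_ball hB, ball_lt_right hB, rfl⟩
  exact ⟨z, ⟨hz, hloz, hzhi, fun e he h₁ h₂ => not_lt.1 (hmin _ ⟨e, he, h₁, h₂, rfl⟩)⟩⟩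

namespace IsSimplest

variable {lo hi z : PGame.{u}}

theorem moveLeft_le (hz : IsSimplest lo hi z) (hlo : lo.Numeric) (i : z.LeftMoves) :
    z.moveLeft i ≤ lo := by
  have hzi := hz.numeric.moveLeft i
  by_contra h
  exact (birthday_moveLeft_lt i).not_ge <| hz.birthday_le _ hzi (hlo.lt_of_not_ge hzi h)
    ((hz.numeric.moveLeft_lt i).trans hz.lt_right)

theorem le_moveRight (hz : IsSimplest lo hi z) (hhi : hi.Numeric) (j : z.RightMoves) :
    hi ≤ z.moveRight j := by
  have hzj := hz.numeric.moveRight j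
  by_contra h
  exact (birthday_moveRight_lt j).not_ge <| hz.birthday_le _ hzj
    (hz.left_lt.trans (hz.numeric.lt_moveRight j)) (hzj.lt_of_not_ge hhi h)

theorem le_of_lt_of_forall_le_moveRight (hz : IsSimplest lo hi z) (hlo : lo.Numeric)
    {x : PGame.{u}} (hx : lo < x) (hxR : ∀ j, hi ≤ x.moveRight j) : z ≤ x :=
  le_of_forall_lt (fun i => (hz.moveLeft_le hlo i).trans_lt hx)
    (fun j => hz.lt_right.trans_le (hxR j))

theorem ball_equiv (hz : IsSimplest lo hi z) (hlo : lo.Numeric) (hhi : hi.Numeric) :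
    ball lo hi ≈ z := by
  have hB := numeric_ball hlo hhi (hz.left_lt.trans hz.lt_right)
  exact ⟨le_of_forall_lt (fun _ => hz.left_lt)
      (fun j => (ball_lt_right hB).trans_le (hz.le_moveRight hhi j)),
    hz.le_of_lt_of_forall_le_moveRight hlo (left_lt_ball hB) (fun _ => le_rfl)⟩

end IsSimplest

section Descent

variable {b c : PGame.{u}}

theorem quot_add_moveLeft_le (hcL : ∀ i, (⟦c.moveLeft i⟧ : Game) ≤ 0) (u : PGame.{u})
    (i : c.LeftMoves) : (⟦u + c.moveLeft i⟧ : Game) ≤ ⟦u⟧ :=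
  (add_le_add_right (hcL i) _).trans_eq (add_zero _)

theorem exists_add_eq_of_le_add (hcL : ∀ i, (⟦c.moveLeft i⟧ : Game) ≤ 0) {w u : PGame.{u}}
    (hu : u.Numeric) (huw : (⟦u⟧ : Game) < ⟦w⟧)
    (hwR : ∀ j, (⟦u⟧ : Game) + ⟦c⟧ < ⟦w.moveRight j⟧) (h : w ≤ u + c) :
    ∃ v : PGame.{u}, v.Numeric ∧ v.birthday ≤ u.birthday ∧ (⟦v⟧ : Game) ≤ ⟦u⟧ ∧
      (⟦v⟧ : Game) + ⟦c⟧ = ⟦w⟧ := by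
  induction u with
  | mk ul ur uL uR IHl _ =>
  by_cases hstop : mk ul ur uL uR + c ≤ w
  · exact ⟨_, hu, le_rfl, le_rfl, le_antisymm hstop h⟩
  rcases exists_of_not_add_le hstop with ⟨i, hi⟩ | ⟨i, hi⟩ | ⟨j, hj⟩
  · have hlt : (⟦uL i⟧ : Game) < ⟦mk ul ur uL uR⟧ := hu.moveLeft_lt i
    obtain ⟨v, hv, hvb, hvu, hvw⟩ := IHl i (hu.moveLeft i) (hlt.trans huw)
      (fun j => (add_lt_add_left hlt _).trans (hwR j)) hi
    exact ⟨v, hv, hvb.trans (birthday_moveLeft_lt i).le, hvu.trans hlt.le, hvw⟩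
  · exact absurd huw ((Game.mk_le_mk.2 hi).trans (quot_add_moveLeft_le hcL _ i)).not_gt
  · exact absurd hj (hwR j).not_ge

theorem exists_birthday_lt_add_eq_ball {L z : PGame.{u}} (hL : L.Numeric) (hb : b.Numeric)
    (hLb : L < b) (hcL : ∀ i, (⟦c.moveLeft i⟧ : Game) ≤ 0) (hcb : (⟦ball L b⟧ : Game) + ⟦c⟧ < ⟦b⟧)
    (hz : IsSimplest (ball L b) b z) (hzc : ¬ ball L b + c ≤ z) :
    ∃ μ : PGame.{u}, μ.Numeric ∧ μ.birthday < L.birthday ∧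
      (⟦μ⟧ : Game) + ⟦c⟧ = ⟦ball L b⟧ := by
  have hLY : (⟦L⟧ : Game) < ⟦ball L b⟧ := left_lt_ball (numeric_ball hL hb hLb)
  have hYz : (⟦ball L b⟧ : Game) < ⟦z⟧ := hz.left_lt
  have hzb : (⟦z⟧ : Game) < ⟦b⟧ := hz.lt_right
  have hzR : ∀ j, (⟦b⟧ : Game) ≤ ⟦z.moveRight j⟧ := hz.le_moveRight hb
  have hzL : z ≤ L + c := by
    rcases exists_of_not_add_le hzc with ⟨_, hi⟩ | ⟨i, hi⟩ | ⟨j, hj⟩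
    · exact hi
    · exact absurd hYz ((Game.mk_le_mk.2 hi).trans (quot_add_moveLeft_le hcL _ i)).not_gt
    · exact absurd ((hzR j).trans hj) hcb.not_ge
  obtain ⟨lam, hlam, hlam_bd, hlam_le, hlamz⟩ := exists_add_eq_of_le_add hcL hL (hLY.trans hYz)
    (fun j => (add_lt_add_left hLY _).trans (hcb.trans_le (hzR j))) hzL
  have hYlam : ¬ lam + c ≤ ball L b :=
    (show (⟦ball L b⟧ : Game) < ⟦lam⟧ + ⟦c⟧ from hlamz ▸ hYz).not_ge
  rcases exists_of_not_add_le hYlam with ⟨i, hi⟩ | ⟨i, hi⟩ | ⟨_, hj⟩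
  · have hlt : (⟦lam.moveLeft i⟧ : Game) < ⟦L⟧ := (hlam.moveLeft_lt i).trans_le hlam_le
    obtain ⟨μ, hμ, hμb, -, hμY⟩ := exists_add_eq_of_le_add hcL (hlam.moveLeft i)
      (hlt.trans hLY) (fun _ => (add_lt_add_left (hlt.trans hLY) _).trans hcb) hi
    exact ⟨μ, hμ, hμb.trans_lt ((birthday_moveLeft_lt i).trans_le hlam_bd), hμY⟩
  · exact absurd (hlam_le.trans_lt hLY)
      ((Game.mk_le_mk.2 hi).trans (quot_add_moveLeft_le hcL _ i)).not_gt
  · exact absurd (Game.mk_le_mk.2 hj) (hlamz ▸ hzb).not_ge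

theorem IsSimplest.add_le {L z : PGame.{u}} (hz : IsSimplest (ball L b) b z) (hL : L.Numeric)
    (hb : b.Numeric) (hLb : L < b) (hc : (0 : Game) < ⟦c⟧) (hcL : ∀ i, (⟦c.moveLeft i⟧ : Game) ≤ 0)
    (hcb : (⟦ball L b⟧ : Game) + ⟦c⟧ < ⟦b⟧) : (⟦ball L b⟧ : Game) + ⟦c⟧ ≤ ⟦z⟧ := by
  by_contra hzc
  obtain ⟨μ, hμ, hμL, hμY⟩ := exists_birthday_lt_add_eq_ball hL hb hLb hcL hcb hz hzc
  have hY := numeric_ball hL hb hLb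
  have hμY' : (⟦μ⟧ : Game) < ⟦ball L b⟧ := hμY ▸ lt_add_of_pos_right _ hc
  have hμb : μ < b := Game.mk_lt_mk.1 (hμY'.trans (ball_lt_right hY))
  have hY' := numeric_ball hμ hb hμb
  have hY'Y : ball μ b ≤ ball L b :=
    le_of_forall_lt (fun _ => hμY') (fun _ => ball_lt_right hY')
  obtain ⟨z', hz'⟩ := exists_isSimplest hY' hb (ball_lt_right hY')
  have ih := hz'.add_le hμ hb hμb hc hcL
    ((add_le_add_left (Game.mk_le_mk.2 hY'Y) _).trans_lt hcb)
  have hz'z : z' ≤ z :=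
    hz'.le_of_lt_of_forall_le_moveRight hY' (hY'Y.trans_lt hz.left_lt) (hz.le_moveRight hb)
  have hY'lt : ball μ b < ball L b := lt_of_le_not_ge hY'Y fun h =>
    hzc ((add_le_add_left (Game.mk_le_mk.2 h) _).trans (ih.trans hz'z))
  have hz'Y : z' ≤ ball L b :=
    hz'.le_of_lt_of_forall_le_moveRight hY' hY'lt (fun _ => le_rfl)
  exact lt_irrefl (⟦ball L b⟧ : Game) <| calc
    (⟦ball L b⟧ : Game) = ⟦μ⟧ + ⟦c⟧ := hμY.symm
    _ < ⟦ball μ b⟧ + ⟦c⟧ := add_lt_add_left (Game.mk_lt_mk.2 (left_lt_ball hY')) _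
    _ ≤ ⟦z'⟧ := ih
    _ ≤ ⟦ball L b⟧ := hz'Y
termination_by L.birthday
decreasing_by exact hμL

end Descent

theorem quot_ball_ball_eq_add {L b c : PGame.{u}} (hL : L.Numeric) (hb : b.Numeric)
    (hLb : L < b) (hc : (0 : Game) < ⟦c⟧) (hcL : ∀ i, (⟦c.moveLeft i⟧ : Game) ≤ 0)
    (hcR : ∀ j, (⟦b⟧ : Game) ≤ ⟦ball L b⟧ + ⟦c.moveRight j⟧)
    (hcb : (⟦ball L b⟧ : Game) + ⟦c⟧ < ⟦b⟧) :
    (⟦ball (ball L b) b⟧ : Game) = ⟦ball L b⟧ + ⟦c⟧ := by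
  have hY := numeric_ball hL hb hLb
  obtain ⟨z, hz⟩ := exists_isSimplest hY hb (ball_lt_right hY)
  rw [Quotient.sound (hz.ball_equiv hY hb)]
  refine le_antisymm (hz.le_of_lt_of_forall_le_moveRight hY ?_ ?_)
    (hz.add_le hL hb hLb hc hcL hcb)
  · exact lt_add_of_pos_right (⟦ball L b⟧ : Game) hc
  · exact forall_rightMoves_add.2 ⟨fun _ => Game.mk_le_mk.1 (le_add_of_nonneg_right hc.le), hcR⟩

theorem le_powHalf_of_forall_powHalf_lt {x : PGame.{u}} (hx : x.Numeric)
    (hx1 : (⟦x⟧ : Game) ≤ 1) {m : ℕ} (hm : ∀ t, 0 < t → (⟦powHalf t⟧ : Game) < ⟦x⟧ → m + 1 ≤ t) :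
    (⟦x⟧ : Game) ≤ ⟦powHalf m⟧ := by
  cases m with
  | zero => exact hx1
  | succ m =>
    by_contra h
    have := hm (m + 1) m.succ_pos ((numeric_powHalf _).lt_of_not_ge hx h)
    omega

theorem quot_ball_ball_eq_add_powHalf {L b : PGame.{u}} (hL : L.Numeric) (hb : b.Numeric)
    (hLb : L < b) (hb1 : (⟦b⟧ : Game) - ⟦ball L b⟧ ≤ 1) {t : ℕ} (ht : 0 < t)
    (hlt : (⟦powHalf t⟧ : Game) < ⟦b⟧ - ⟦ball L b⟧)
    (hmin : ∀ s, 0 < s → (⟦powHalf s⟧ : Game) < ⟦b⟧ - ⟦ball L b⟧ → t ≤ s) :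
    (⟦ball (ball L b) b⟧ : Game) = ⟦ball L b⟧ + ⟦powHalf t⟧ := by
  obtain ⟨m, rfl⟩ : ∃ m, t = m + 1 := ⟨t - 1, by omega⟩
  have hle : (⟦b⟧ : Game) - ⟦ball L b⟧ ≤ ⟦powHalf m⟧ :=
    le_powHalf_of_forall_powHalf_lt (hb.add (numeric_ball hL hb hLb).neg) hb1 hmin
  exact quot_ball_ball_eq_add hL hb hLb (powHalf_pos _)
    (fun i => Game.mk_le_mk.2 (powHalf_moveLeft _ i).le) (fun _ => sub_le_iff_le_add'.1 hle)
    (lt_sub_iff_add_lt'.1 hlt)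

end PGame

end SetTheory

theorem ordinalSum_canonNat_zero_equiv (G : PGame.{u}) : ordinalSum G (canonNat 0) ≈ G :=
  ⟨le_def.2 ⟨fun
      | .inl i => moveLeft_lf_of_le le_rfl i
      | .inr i => PEmpty.elim i,
    fun j => lf_of_moveRight_le (j := .inl j) le_rfl⟩,
   le_def.2 ⟨fun i => lf_of_le_moveLeft (i := .inl i) le_rfl, fun
      | .inl j => lf_moveRight_of_le le_rfl j
      | .inr j => PEmpty.elim j⟩⟩

theorem ordinalSum_ball_canonNat_succ_equiv {a b x : PGame.{u}} {k : ℕ}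
    (hk : ordinalSum (ball a b) (canonNat k) ≈ x) (hax : a ≤ x) :
    ordinalSum (ball a b) (canonNat (k + 1)) ≈ ball x b :=
  ⟨le_def.2 ⟨fun
      | .inl _ => lf_of_le_moveLeft (i := PUnit.unit) hax
      | .inr _ => lf_of_le_moveLeft (i := PUnit.unit) hk.1,
    fun _ => lf_of_moveRight_le (j := .inl PUnit.unit) le_rfl⟩,
   le_def.2 ⟨fun _ => lf_of_le_moveLeft (i := .inr PUnit.unit) hk.2, fun
      | .inl _ => lf_of_moveRight_le (j := PUnit.unit) le_rfl
      | .inr j => PEmpty.elim j⟩⟩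

theorem neg_ordinalSum (G H : PGame.{u}) : -ordinalSum G H = ordinalSum (-G) (-H) := by
  cases G
  induction H with
  | mk hl hr hL hR IHl IHr =>
    show mk _ _ _ _ = mk _ _ _ _
    congr 1 <;> funext i <;> rcases i with i | i
    · rfl
    · exact IHr i
    · rfl
    · exact IHl i

theorem ordinalSum_ball_neg (a b H : PGame.{u}) :
    ordinalSum (ball a b) (-H) = -ordinalSum (ball (-b) (-a)) H := by
  rw [neg_ordinalSum]
  show ordinalSum _ _ = ordinalSum (ball (-(-a)) (-(-b))) _
  rw [neg_neg, neg_neg]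

theorem canonInt_neg_natCast (k : ℕ) : canonInt (-(k : ℤ)) = -canonNat k := by
  cases k with
  | zero =>
    rw [canonInt, if_pos (by simp)]
    show mk _ _ _ _ = mk _ _ _ _
    congr 1 <;> funext i <;> exact PEmpty.elim i
  | succ k => rw [canonInt, if_neg (by omega), neg_neg, Int.toNat_natCast]

theorem numeric_iterate_ball {a b : PGame.{u}} (ha : a.Numeric) (hb : b.Numeric) (hab : a < b) :
    ∀ k, ((fun x => ball x b)^[k] a).Numeric ∧ a ≤ (fun x => ball x b)^[k] a ∧
      (fun x => ball x b)^[k] a < b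
  | 0 => ⟨ha, le_rfl, hab⟩
  | k + 1 => by
    obtain ⟨hY, haY, hYb⟩ := numeric_iterate_ball ha hb hab k
    have hB := numeric_ball hY hb hYb
    rw [Function.iterate_succ_apply']
    exact ⟨hB, haY.trans (left_lt_ball hB).le, ball_lt_right hB⟩

theorem ordinalSum_ball_canonNat_equiv_iterate {a b : PGame.{u}} (ha : a.Numeric)
    (hb : b.Numeric) (hab : a < b) :
    ∀ k, ordinalSum (ball a b) (canonNat k) ≈ (fun x => ball x b)^[k + 1] a
  | 0 => ordinalSum_canonNat_zero_equiv _
  | k + 1 => by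
    rw [Function.iterate_succ_apply' _ (k + 1)]
    exact ordinalSum_ball_canonNat_succ_equiv
      (ordinalSum_ball_canonNat_equiv_iterate ha hb hab k)
      (numeric_iterate_ball ha hb hab (k + 1)).2.1

def IsGreedyExpansion (r : Game.{u}) (k : ℕ) (α : ℕ → ℕ) : Prop :=
  ∀ i, i < k → 0 < α i ∧
    (⟦powHalf (α i)⟧ : Game) < r - ∑ j ∈ Finset.range i, (⟦powHalf (α j)⟧ : Game) ∧
    ∀ t : ℕ, 0 < t →
      (⟦powHalf t⟧ : Game) < r - ∑ j ∈ Finset.range i, (⟦powHalf (α j)⟧ : Game) → α i ≤ t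

theorem quot_iterate_ball {a b : PGame.{u}} (ha : a.Numeric) (hb : b.Numeric) (hab : a < b)
    (hb1 : (⟦b⟧ : Game) - ⟦ball a b⟧ ≤ 1) {α : ℕ → ℕ} :
    ∀ {k}, IsGreedyExpansion (⟦b⟧ - ⟦ball a b⟧) k α →
      (⟦(fun x => ball x b)^[k + 1] a⟧ : Game) =
        ⟦ball a b⟧ + ∑ i ∈ Finset.range k, (⟦powHalf (α i)⟧ : Game)
  | 0, _ => by rw [Finset.sum_range_zero, add_zero]; rfl
  | k + 1, hα => by
    have ih := quot_iterate_ball ha hb hab hb1 fun i hi => hα i (Nat.lt_succ_of_lt hi)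
    obtain ⟨hpos, hlt, hmin⟩ := hα k k.lt_succ_self
    obtain ⟨hL, -, hLb⟩ := numeric_iterate_ball ha hb hab k
    have hY : (fun x => ball x b)^[k + 1] a = ball ((fun x => ball x b)^[k] a) b :=
      Function.iterate_succ_apply' _ _ _
    have hsum : (0 : Game) ≤ ∑ i ∈ Finset.range k, (⟦powHalf (α i)⟧ : Game) :=
      Finset.sum_nonneg fun i _ => (powHalf_pos (α i)).le
    have hb1' : (⟦b⟧ : Game) - ⟦ball ((fun x => ball x b)^[k] a) b⟧ ≤ 1 := by
      rw [← hY, ih]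
      exact (sub_le_sub_left (le_add_of_nonneg_right hsum) _).trans hb1
    rw [sub_sub, ← ih, hY] at hlt hmin
    rw [Function.iterate_succ_apply', Finset.sum_range_succ, ← add_assoc, ← ih, hY]
    exact quot_ball_ball_eq_add_powHalf hL hb hLb hb1' hpos hlt hmin

theorem quot_ordinalSum_ball_canonNat {a b : PGame.{u}} (hG : (ball a b).Numeric) {k : ℕ}
    {α : ℕ → ℕ} (hb1 : (⟦b⟧ : Game) - ⟦ball a b⟧ ≤ 1)
    (hα : IsGreedyExpansion (⟦b⟧ - ⟦ball a b⟧) k α) :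
    (⟦ordinalSum (ball a b) (canonNat k)⟧ : Game) =
      ⟦ball a b⟧ + ∑ i ∈ Finset.range k, (⟦powHalf (α i)⟧ : Game) := by
  have ha : a.Numeric := hG.moveLeft PUnit.unit
  have hb : b.Numeric := hG.moveRight PUnit.unit
  have hab : a < b := (left_lt_ball hG).trans (ball_lt_right hG)
  rw [Quotient.sound (ordinalSum_ball_canonNat_equiv_iterate ha hb hab k)]
  exact quot_iterate_ball ha hb hab hb1 hα

theorem general_ordinalSum_general (a b : PGame) (hG : (ball a b).Numeric) (k : ℕ) :
    (∀ α : ℕ → ℕ,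
      (⟦b⟧ : Game) - ⟦ball a b⟧ ≤ 1 →
      (∀ i, i < k → 0 < α i ∧
        (⟦powHalf (α i)⟧ : Game) <
          ⟦b⟧ - ⟦ball a b⟧ - ∑ j ∈ Finset.range i, (⟦powHalf (α j)⟧ : Game) ∧
        ∀ t : ℕ, 0 < t →
          (⟦powHalf t⟧ : Game) <
            ⟦b⟧ - ⟦ball a b⟧ - ∑ j ∈ Finset.range i, (⟦powHalf (α j)⟧ : Game) →
          α i ≤ t) →
      (⟦ordinalSum (ball a b) (canonNat k)⟧ : Game) =
        ⟦ball a b⟧ + ∑ i ∈ Finset.range k, (⟦powHalf (α i)⟧ : Game)) ∧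
    (∀ β : ℕ → ℕ,
      (⟦ball a b⟧ : Game) - ⟦a⟧ ≤ 1 →
      (∀ i, i < k → 0 < β i ∧
        (⟦powHalf (β i)⟧ : Game) <
          ⟦ball a b⟧ - ⟦a⟧ - ∑ j ∈ Finset.range i, (⟦powHalf (β j)⟧ : Game) ∧
        ∀ t : ℕ, 0 < t →
          (⟦powHalf t⟧ : Game) <
            ⟦ball a b⟧ - ⟦a⟧ - ∑ j ∈ Finset.range i, (⟦powHalf (β j)⟧ : Game) →
          β i ≤ t) →
      (⟦ordinalSum (ball a b) (canonInt (-(k : ℤ)))⟧ : Game) =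
        ⟦ball a b⟧ - ∑ i ∈ Finset.range k, (⟦powHalf (β i)⟧ : Game)) := by
  refine ⟨fun α hb1 hα => quot_ordinalSum_ball_canonNat hG hb1 hα, fun β ha1 hβ => ?_⟩
  have hr : (⟦-a⟧ : Game) - ⟦ball (-b) (-a)⟧ = ⟦ball a b⟧ - ⟦a⟧ := by
    show -⟦a⟧ - -⟦ball a b⟧ = _
    abel
  have hdual := quot_ordinalSum_ball_canonNat (a := -b) (b := -a) hG.neg (hr ▸ ha1) (hr ▸ hβ)
  rw [canonInt_neg_natCast, ordinalSum_ball_neg]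
  show -(⟦ordinalSum (ball (-b) (-a)) (canonNat k)⟧ : Game) = _
  rw [hdual]
  show -(-⟦ball a b⟧ + _) = _
  abel

/-- General Ordinal Sum Theorem.  For a ball `G ≅ ⟨a | b⟩` of numbers with `b − G ≤ 1`
and `αᵢ` the least positive integer with `2^{−αᵢ} < (b − G) − Σ_{j<i} 2^{−αⱼ}`, one has
`G : k = G + Σ_{i<k} 2^{−αᵢ}` for every positive integer `k` in canonical form; dually
for `G − a ≤ 1`, the `βᵢ`, and `G : (−k)`. -/
theorem general_ordinalSum (a b : PGame) (ha : a.Numeric) (hb : b.Numeric)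
    (hG : (ball a b).Numeric) (k : ℕ) (hk : 0 < k) :
    (∀ α : ℕ → ℕ,
      (⟦b⟧ : Game) - ⟦ball a b⟧ ≤ 1 →
      (∀ i, i < k → 0 < α i ∧
        (⟦powHalf (α i)⟧ : Game) <
          ⟦b⟧ - ⟦ball a b⟧ - ∑ j ∈ Finset.range i, (⟦powHalf (α j)⟧ : Game) ∧
        ∀ t : ℕ, 0 < t →
          (⟦powHalf t⟧ : Game) <
            ⟦b⟧ - ⟦ball a b⟧ - ∑ j ∈ Finset.range i, (⟦powHalf (α j)⟧ : Game) →
          α i ≤ t) →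
      (⟦ordinalSum (ball a b) (canonNat k)⟧ : Game) =
        ⟦ball a b⟧ + ∑ i ∈ Finset.range k, (⟦powHalf (α i)⟧ : Game)) ∧
    (∀ β : ℕ → ℕ,
      (⟦ball a b⟧ : Game) - ⟦a⟧ ≤ 1 →
      (∀ i, i < k → 0 < β i ∧
        (⟦powHalf (β i)⟧ : Game) <
          ⟦ball a b⟧ - ⟦a⟧ - ∑ j ∈ Finset.range i, (⟦powHalf (β j)⟧ : Game) ∧
        ∀ t : ℕ, 0 < t →
          (⟦powHalf t⟧ : Game) <
            ⟦ball a b⟧ - ⟦a⟧ - ∑ j ∈ Finset.range i, (⟦powHalf (β j)⟧ : Game) →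
          β i ≤ t) →
      (⟦ordinalSum (ball a b) (canonInt (-(k : ℤ)))⟧ : Game) =
        ⟦ball a b⟧ - ∑ i ∈ Finset.range k, (⟦powHalf (β i)⟧ : Game)) :=
  general_ordinalSum_general a b hG k
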